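/- arXiv:1101.0067 — 5 statements merged into one kernel-verified Lean document; each statement's English description precedes it below -/
import Mathlib

section
/- Schur's Test: Let k : ℝⁿ × ℝⁿ → ℂ be measurable and suppose there are constants C₁, C₂ < ∞ with sup_{x∈ℝⁿ} ∫_{ℝⁿ} |k(x,y)| dy ≤ C₁ and sup_{y∈ℝⁿ} ∫_{ℝⁿ} |k(x,y)| dx ≤ C₂. Then for every u ∈ L²(ℝⁿ) the integral (Ku)(x) := ∫_{ℝⁿ} k(x,y) u(y) dy converges absolutely for almost every x, Ku ∈ L²(ℝⁿ), and ‖Ku‖_{L²} ≤ √(C₁C₂) · ‖u‖_{L²}. -/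
/-!
Split `|k(x,y)| |u(y)| = |k(x,y)|^{1/2} · |k(x,y)|^{1/2} |u(y)|` and apply Cauchy–Schwarz in `y`:
`(∫ |k(x,y)| |u(y)| dy)² ≤ C₁ ∫ |k(x,y)| |u(y)|² dy`. Integrating in `x` and exchanging the
order of integration (Tonelli) gives `∫ (∫ |k(x,y)| |u(y)| dy)² dx ≤ C₁ C₂ ‖u‖²`. The inner
integral dominates `|Ku(x)|`, and since the estimate holds in `ℝ≥0∞` it is finite for almost
every `x`.
-/

open MeasureTheory
open scoped ENNReal

theorem ENNReal.ofReal_mul_ofReal_le_ofReal_sqrt_sq (a b : ℝ) :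
    ENNReal.ofReal a * ENNReal.ofReal b ≤ ENNReal.ofReal √(a * b) ^ 2 := by
  rcases le_or_gt 0 a with ha | ha
  · rw [← ENNReal.ofReal_mul ha, ← ENNReal.ofReal_pow (Real.sqrt_nonneg _), Real.sq_sqrt']
    exact ENNReal.ofReal_le_ofReal (le_max_left _ _)
  · simp [ENNReal.ofReal_of_nonpos ha.le]

namespace MeasureTheory

variable {α β : Type*} [MeasurableSpace α] [MeasurableSpace β] {μ : Measure α} {ν : Measure β}

theorem lintegral_mul_sq_le {f w : α → ℝ≥0∞} (hf : AEMeasurable f μ) (hw : AEMeasurable w μ) :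
    (∫⁻ a, f a * w a ∂μ) ^ 2 ≤ (∫⁻ a, f a ∂μ) * ∫⁻ a, f a * w a ^ 2 ∂μ := by
  -- Hölder with exponents `2, 2` applied to `√f` and `√f * w`
  have h := ENNReal.lintegral_mul_le_Lp_mul_Lq μ Real.HolderConjugate.two_two
    (f := fun a => f a ^ (1 / 2 : ℝ)) (g := fun a => f a ^ (1 / 2 : ℝ) * w a)
    (hf.pow_const _) ((hf.pow_const _).mul hw)
  have hsqrt_sq : ∀ a, (f a ^ (1 / 2 : ℝ)) ^ (2 : ℝ) = f a := fun a => by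
    rw [← ENNReal.rpow_mul]; norm_num
  have hsqrt_mul : ∀ a, f a ^ (1 / 2 : ℝ) * (f a ^ (1 / 2 : ℝ) * w a) = f a * w a := fun a => by
    rw [← mul_assoc, ← ENNReal.rpow_add_of_nonneg _ _ (by norm_num) (by norm_num)]; norm_num
  simp only [Pi.mul_apply, hsqrt_mul, ENNReal.mul_rpow_of_nonneg _ _ zero_le_two, hsqrt_sq] at h
  calc (∫⁻ a, f a * w a ∂μ) ^ 2
      ≤ ((∫⁻ a, f a ∂μ) ^ (1 / 2 : ℝ) * (∫⁻ a, f a * w a ^ (2 : ℝ) ∂μ) ^ (1 / 2 : ℝ)) ^ 2 := by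
        gcongr
    _ = (∫⁻ a, f a ∂μ) * ∫⁻ a, f a * w a ^ 2 ∂μ := by
        simp only [mul_pow, ← ENNReal.rpow_two, ← ENNReal.rpow_mul]; norm_num

theorem lintegral_sq_lintegral_mul_le [SFinite μ] [SFinite ν] {K : α → β → ℝ≥0∞} {g : β → ℝ≥0∞}
    {A B : ℝ≥0∞} (hK : Measurable (Function.uncurry K)) (hg : AEMeasurable g ν)
    (hA : ∀ x, ∫⁻ y, K x y ∂ν ≤ A) (hB : ∀ y, ∫⁻ x, K x y ∂μ ≤ B) :
    ∫⁻ x, (∫⁻ y, K x y * g y ∂ν) ^ 2 ∂μ ≤ A * B * ∫⁻ y, g y ^ 2 ∂ν := by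
  have hKg : AEMeasurable (fun p : α × β => K p.1 p.2 * g p.2 ^ 2) (μ.prod ν) :=
    hK.aemeasurable.mul (hg.comp_snd.pow_const 2)
  calc ∫⁻ x, (∫⁻ y, K x y * g y ∂ν) ^ 2 ∂μ
      ≤ ∫⁻ x, A * ∫⁻ y, K x y * g y ^ 2 ∂ν ∂μ := lintegral_mono fun x =>
        (lintegral_mul_sq_le (hK.comp measurable_prodMk_left).aemeasurable hg).trans
          (mul_le_mul_left (hA x) _)
    _ = A * ∫⁻ y, (∫⁻ x, K x y ∂μ) * g y ^ 2 ∂ν := by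
        rw [lintegral_const_mul'' _ hKg.lintegral_prod_right', lintegral_lintegral_swap hKg]
        congr 1
        exact lintegral_congr fun y =>
          lintegral_mul_const (g y ^ 2) (hK.comp measurable_prodMk_right :)
    _ ≤ A * ∫⁻ y, B * g y ^ 2 ∂ν := by gcongr with y; exact hB y
    _ = A * B * ∫⁻ y, g y ^ 2 ∂ν := by rw [lintegral_const_mul'' _ (hg.pow_const 2), mul_assoc]

theorem eLpNorm_two_sq {E : Type*} [NormedAddCommGroup E] (f : α → E) :
    eLpNorm f 2 μ ^ 2 = ∫⁻ x, ‖f x‖ₑ ^ 2 ∂μ := by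
  simpa [ENNReal.rpow_two] using eLpNorm_nnreal_pow_eq_lintegral (μ := μ) (f := f) two_ne_zero

section IntegralOperator

variable {𝕜 : Type*} [RCLike 𝕜] [SFinite μ] [SFinite ν] {k : α → β → 𝕜} {u : β → 𝕜}
  {A B : ℝ≥0∞}

theorem lintegral_sq_lintegral_enorm_mul_le (hk : Measurable (Function.uncurry k))
    (hu : AEStronglyMeasurable u ν) (hA : ∀ x, ∫⁻ y, ‖k x y‖ₑ ∂ν ≤ A)
    (hB : ∀ y, ∫⁻ x, ‖k x y‖ₑ ∂μ ≤ B) :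
    ∫⁻ x, (∫⁻ y, ‖k x y * u y‖ₑ ∂ν) ^ 2 ∂μ ≤ A * B * eLpNorm u 2 ν ^ 2 := by
  simpa only [enorm_mul, eLpNorm_two_sq] using
    lintegral_sq_lintegral_mul_le hk.enorm hu.enorm hA hB

theorem ae_integrable_mul_of_memLp_two (hk : Measurable (Function.uncurry k))
    (hu : MemLp u 2 ν) (hA : ∀ x, ∫⁻ y, ‖k x y‖ₑ ∂ν ≤ A) (hB : ∀ y, ∫⁻ x, ‖k x y‖ₑ ∂μ ≤ B)
    (hAB : A * B ≠ ∞) : ∀ᵐ x ∂μ, Integrable (fun y => k x y * u y) ν := by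
  have hfin : ∫⁻ x, (∫⁻ y, ‖k x y * u y‖ₑ ∂ν) ^ 2 ∂μ ≠ ∞ :=
    ((lintegral_sq_lintegral_enorm_mul_le hk hu.1 hA hB).trans_lt
      (ENNReal.mul_lt_top hAB.lt_top (ENNReal.pow_lt_top hu.2))).ne
  have hmeas : AEMeasurable (fun x => (∫⁻ y, ‖k x y * u y‖ₑ ∂ν) ^ 2) μ :=
    ((hk.aestronglyMeasurable.mul hu.1.comp_snd).enorm.lintegral_prod_right').pow_const 2
  filter_upwards [ae_lt_top' hmeas hfin] with x hx
  exact ⟨(hk.comp measurable_prodMk_left).aestronglyMeasurable.mul hu.1,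
    (ENNReal.pow_lt_top_iff.mp hx).resolve_right two_ne_zero⟩

theorem eLpNorm_integral_mul_sq_le (hk : Measurable (Function.uncurry k))
    (hu : AEStronglyMeasurable u ν) (hA : ∀ x, ∫⁻ y, ‖k x y‖ₑ ∂ν ≤ A)
    (hB : ∀ y, ∫⁻ x, ‖k x y‖ₑ ∂μ ≤ B) :
    eLpNorm (fun x => ∫ y, k x y * u y ∂ν) 2 μ ^ 2 ≤ A * B * eLpNorm u 2 ν ^ 2 := by
  rw [eLpNorm_two_sq]
  refine le_trans (lintegral_mono fun x => ?_) (lintegral_sq_lintegral_enorm_mul_le hk hu hA hB)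
  gcongr
  exact enorm_integral_le_lintegral_enorm _

theorem memLp_integral_mul (hk : Measurable (Function.uncurry k))
    (hu : MemLp u 2 ν) (hA : ∀ x, ∫⁻ y, ‖k x y‖ₑ ∂ν ≤ A) (hB : ∀ y, ∫⁻ x, ‖k x y‖ₑ ∂μ ≤ B)
    (hAB : A * B ≠ ∞) : MemLp (fun x => ∫ y, k x y * u y ∂ν) 2 μ := by
  refine ⟨(hk.aestronglyMeasurable.mul hu.1.comp_snd).integral_prod_right', ?_⟩
  refine (ENNReal.pow_lt_top_iff.mp ?_).resolve_right two_ne_zero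
  exact (eLpNorm_integral_mul_sq_le hk hu.1 hA hB).trans_lt
    (ENNReal.mul_lt_top hAB.lt_top (ENNReal.pow_lt_top hu.2))

end IntegralOperator

end MeasureTheory

/-- **Schur's Test**: if `k : ℝⁿ × ℝⁿ → ℂ` is measurable with
`sup_x ∫ |k(x,y)| dy ≤ C₁ < ∞` and `sup_y ∫ |k(x,y)| dx ≤ C₂ < ∞`, then for every
`u ∈ L²(ℝⁿ)` the integral `(Ku)(x) = ∫ k(x,y) u(y) dy` converges absolutely for a.e. `x`,
`Ku ∈ L²(ℝⁿ)`, and `‖Ku‖_{L²} ≤ √(C₁ C₂) ‖u‖_{L²}`. -/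
theorem schur_test (n : ℕ) (k : EuclideanSpace ℝ (Fin n) → EuclideanSpace ℝ (Fin n) → ℂ)
    (hk : Measurable (Function.uncurry k)) (C₁ C₂ : ℝ)
    (h₁ : ∀ x, ∫⁻ y, (‖k x y‖₊ : ℝ≥0∞) ≤ ENNReal.ofReal C₁)
    (h₂ : ∀ y, ∫⁻ x, (‖k x y‖₊ : ℝ≥0∞) ≤ ENNReal.ofReal C₂) :
    ∀ u : EuclideanSpace ℝ (Fin n) → ℂ, MemLp u 2 volume →
      (∀ᵐ x, Integrable (fun y => k x y * u y) volume) ∧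
      MemLp (fun x => ∫ y, k x y * u y) 2 volume ∧
      eLpNorm (fun x => ∫ y, k x y * u y) 2 volume ≤
        ENNReal.ofReal (Real.sqrt (C₁ * C₂)) * eLpNorm u 2 volume := by
  intro u hu
  have hC : ENNReal.ofReal C₁ * ENNReal.ofReal C₂ ≠ ∞ :=
    ENNReal.mul_ne_top ENNReal.ofReal_ne_top ENNReal.ofReal_ne_top
  refine ⟨ae_integrable_mul_of_memLp_two hk hu h₁ h₂ hC, memLp_integral_mul hk hu h₁ h₂ hC, ?_⟩
  rw [← ENNReal.pow_le_pow_left_iff two_ne_zero, mul_pow]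
  exact (eLpNorm_integral_mul_sq_le hk hu.1 h₁ h₂).trans
    (mul_le_mul_left (ENNReal.ofReal_mul_ofReal_le_ofReal_sqrt_sq C₁ C₂) _)
end

section
/- Resolvent estimate for homogeneous matrix symbols: Let m > 0 and N ≥ 1. Let a : ℝⁿ → M(N,ℂ) be continuous with a(cξ) = c^m a(ξ) for all c > 0 and ξ ∈ ℝⁿ (in particular a(0) = 0). Let L ⊆ ℂ be a closed set with cλ ∈ L for all c > 0 and λ ∈ L (for instance a finite union of closed rays emanating from the origin). Assume that a(ξ) − λ·I is invertible for every ξ ∈ ℝⁿ with |ξ| = 1 and every λ ∈ L. Then there is a constant C > 0 such that for all ξ ∈ ℝⁿ and λ ∈ L with (ξ,λ) ≠ (0,0), the matrix a(ξ) − λ·I is invertible and ‖(a(ξ) − λ·I)^{−1}‖ ≤ C (|ξ| + |λ|^{1/m})^{−m}. -/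
open scoped Matrix.Norms.L2Operator

/-!
Both `a(ξ) - λI` and the weight `(|ξ| + |λ|^{1/m})^m` are homogeneous of degree `m` under the
anisotropic dilations `(ξ, λ) ↦ (sξ, s^m λ)`, which preserve `L`. Rescaling `ξ` to the unit
sphere gives invertibility off the origin (for `ξ = 0` use `a 0 = 0`). The product of the
resolvent norm and the weight is therefore dilation invariant, so it suffices to bound it on the
compact anisotropic unit sphere `{λ ∈ L, |ξ| + |λ|^{1/m} = 1}`, where the resolvent is continuous
because inversion is continuous on the units of a Banach algebra.
-/

theorem map_zero_of_rpow_homogeneous {E F : Type*} [AddCommGroup E] [Module ℝ E]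
    [AddCommGroup F] [Module ℝ F] {m : ℝ} (hm : 0 < m) {f : E → F}
    (hf : ∀ c : ℝ, 0 < c → ∀ x, f (c • x) = c ^ m • f x) : f 0 = 0 := by
  have h2m : (2 : ℝ) ^ m - 1 ≠ 0 := sub_ne_zero.2 (Real.one_lt_rpow one_lt_two hm).ne'
  have : ((2 : ℝ) ^ m - 1) • f 0 = 0 := by
    rw [sub_smul, one_smul, ← hf 2 two_pos, smul_zero, sub_self]
  exact (smul_eq_zero.1 this).resolve_left h2m

theorem IsCompact.exists_bound_norm_ringInverse_comp {X R : Type*} [TopologicalSpace X]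
    [NormedRing R] [CompleteSpace R] {K : Set X} (hK : IsCompact K) {f : X → R}
    (hf : ContinuousOn f K) (hu : ∀ x ∈ K, IsUnit (f x)) :
    ∃ C, ∀ x ∈ K, ‖Ring.inverse (f x)‖ ≤ C :=
  hK.exists_bound_of_continuousOn fun x hx => by
    have hinv := NormedRing.inverse_continuousAt (hu x hx).unit
    rw [IsUnit.unit_spec] at hinv
    exact hinv.comp_continuousWithinAt (hf x hx)

section AnisotropicNorm

variable {E : Type*} [NormedAddCommGroup E] {m : ℝ}

noncomputable def anisotropicNorm (m : ℝ) (p : E × ℂ) : ℝ := ‖p.1‖ + ‖p.2‖ ^ (1 / m)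

def anisotropicSphere (m : ℝ) (L : Set ℂ) : Set (E × ℂ) :=
  {p | p.2 ∈ L ∧ anisotropicNorm m p = 1}

theorem anisotropicNorm_pos {p : E × ℂ} (hp : p ≠ 0) : 0 < anisotropicNorm m p := by
  obtain ⟨ξ, lam⟩ := p
  rcases eq_or_ne ξ 0 with rfl | hξ
  · have hlam : lam ≠ 0 := fun h => hp (by simp [h])
    exact add_pos_of_nonneg_of_pos (norm_nonneg _)
      (Real.rpow_pos_of_pos (norm_pos_iff.2 hlam) _)
  · exact add_pos_of_pos_of_nonneg (norm_pos_iff.2 hξ) (by positivity)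

theorem anisotropicNorm_zero (hm : 0 < m) : anisotropicNorm m (0 : E × ℂ) = 0 := by
  simp [anisotropicNorm, Real.zero_rpow (inv_ne_zero hm.ne')]

theorem continuous_anisotropicNorm (hm : 0 ≤ m) : Continuous (anisotropicNorm (E := E) m) :=
  continuous_fst.norm.add
    ((Real.continuous_rpow_const (one_div_nonneg.2 hm)).comp continuous_snd.norm)

theorem isCompact_anisotropicSphere [ProperSpace E] (hm : 0 < m) {L : Set ℂ} (hL : IsClosed L) :
    IsCompact (anisotropicSphere m L : Set (E × ℂ)) := by
  refine Metric.isCompact_of_isClosed_isBounded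
    ((hL.preimage continuous_snd).inter
      (isClosed_eq (continuous_anisotropicNorm hm.le) continuous_const))
    ((Metric.isBounded_closedBall (x := 0) (r := 1)).subset ?_)
  rintro ⟨ξ, lam⟩ ⟨-, hρ : ‖ξ‖ + ‖lam‖ ^ (1 / m) = 1⟩
  have hlam : ‖lam‖ ^ (1 / m) ≤ 1 := by linarith [norm_nonneg ξ]
  rw [Metric.mem_closedBall, dist_zero_right, Prod.norm_def]
  refine max_le (by linarith [Real.rpow_nonneg (norm_nonneg lam) (1 / m)]) ?_
  calc ‖lam‖ = (‖lam‖ ^ (1 / m)) ^ m := by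
        rw [one_div, Real.rpow_inv_rpow (norm_nonneg _) hm.ne']
    _ ≤ 1 := Real.rpow_le_one (by positivity) hlam hm.le

variable [NormedSpace ℝ E]

theorem anisotropicNorm_smul_rpow (hm : 0 < m) {s : ℝ} (hs : 0 ≤ s) (ξ : E) (lam : ℂ) :
    anisotropicNorm m (s • ξ, s ^ m • lam) = s * anisotropicNorm m (ξ, lam) := by
  have hsm : (s ^ m) ^ (1 / m) = s := by rw [one_div, Real.rpow_rpow_inv hs hm.ne']
  simp only [anisotropicNorm, norm_smul, Real.norm_of_nonneg hs,
    Real.norm_of_nonneg (Real.rpow_nonneg hs m),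
    Real.mul_rpow (Real.rpow_nonneg hs m) (norm_nonneg lam), hsm, mul_add]

end AnisotropicNorm

section Symbol

variable {E ι : Type*} [NormedAddCommGroup E] [NormedSpace ℝ E] [DecidableEq ι]
  {m : ℝ} {a : E → Matrix ι ι ℂ}

theorem sub_smul_one_smul_rpow (hhom : ∀ c : ℝ, 0 < c → ∀ ξ, a (c • ξ) = (c ^ m : ℝ) • a ξ)
    {s : ℝ} (hs : 0 < s) (ξ : E) (lam : ℂ) :
    a (s • ξ) - (s ^ m • lam) • (1 : Matrix ι ι ℂ) = s ^ m • (a ξ - lam • 1) := by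
  rw [hhom s hs, smul_sub, smul_assoc]

variable [Fintype ι]

theorem isUnit_sub_smul_one (hm : 0 < m)
    (hhom : ∀ c : ℝ, 0 < c → ∀ ξ, a (c • ξ) = (c ^ m : ℝ) • a ξ) {L : Set ℂ}
    (hLcone : ∀ c : ℝ, 0 < c → ∀ lam ∈ L, (c : ℂ) * lam ∈ L)
    (hinv : ∀ ξ : E, ‖ξ‖ = 1 → ∀ lam ∈ L, IsUnit (a ξ - lam • (1 : Matrix ι ι ℂ)))
    {ξ : E} {lam : ℂ} (hlam : lam ∈ L) (hne : (ξ, lam) ≠ 0) :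
    IsUnit (a ξ - lam • (1 : Matrix ι ι ℂ)) := by
  rcases eq_or_ne ξ 0 with rfl | hξ
  · have hlam0 : lam ≠ 0 := fun h => hne (by simp [h])
    rw [map_zero_of_rpow_homogeneous hm hhom, zero_sub, ← Algebra.algebraMap_eq_smul_one]
    exact (hlam0.isUnit.map (algebraMap ℂ (Matrix ι ι ℂ))).neg
  · set s := ‖ξ‖⁻¹
    have hs : 0 < s := inv_pos.2 (norm_pos_iff.2 hξ)
    have hunit := hinv (s • ξ) (by simp [s, norm_smul, hξ]) (s ^ m • lam)
      (by simpa only [Complex.real_smul] using hLcone _ (Real.rpow_pos_of_pos hs m) lam hlam)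
    rwa [sub_smul_one_smul_rpow hhom hs, ← Units.val_mk0 (Real.rpow_pos_of_pos hs m).ne',
      ← Units.smul_def, isUnit_smul_iff] at hunit

theorem norm_inv_sub_smul_one_eq (hhom : ∀ c : ℝ, 0 < c → ∀ ξ, a (c • ξ) = (c ^ m : ℝ) • a ξ)
    {s : ℝ} (hs : 0 < s) (ξ : E) (lam : ℂ) :
    ‖(a ξ - lam • (1 : Matrix ι ι ℂ))⁻¹‖ =
      s ^ m * ‖(a (s • ξ) - (s ^ m • lam) • (1 : Matrix ι ι ℂ))⁻¹‖ := by
  have hsm : s ^ m ≠ 0 := (Real.rpow_pos_of_pos hs m).ne'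
  rw [sub_smul_one_smul_rpow hhom hs]
  set A := a ξ - lam • (1 : Matrix ι ι ℂ)
  by_cases hA : IsUnit A
  · rw [← Complex.coe_smul, ← Units.val_mk0 (Complex.ofReal_ne_zero.2 hsm), ← Units.smul_def,
      Matrix.inv_smul' _ _ ((Matrix.isUnit_iff_isUnit_det A).1 hA), Units.smul_def,
      Units.val_inv_eq_inv_val, Units.val_mk0, norm_smul, norm_inv, Complex.norm_real,
      Real.norm_of_nonneg (Real.rpow_pos_of_pos hs m).le, mul_inv_cancel_left₀ hsm]
  · have hsA : ¬IsUnit (s ^ m • A) := by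
      rwa [← Units.val_mk0 hsm, ← Units.smul_def, isUnit_smul_iff]
    simp only [Matrix.nonsing_inv_eq_ringInverse, Ring.inverse_non_unit _ hA,
      Ring.inverse_non_unit _ hsA, norm_zero, mul_zero]

theorem exists_norm_inv_le_on_anisotropicSphere [ProperSpace E] (hm : 0 < m) (ha : Continuous a)
    (hhom : ∀ c : ℝ, 0 < c → ∀ ξ, a (c • ξ) = (c ^ m : ℝ) • a ξ) {L : Set ℂ} (hL : IsClosed L)
    (hLcone : ∀ c : ℝ, 0 < c → ∀ lam ∈ L, (c : ℂ) * lam ∈ L)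
    (hinv : ∀ ξ : E, ‖ξ‖ = 1 → ∀ lam ∈ L, IsUnit (a ξ - lam • (1 : Matrix ι ι ℂ))) :
    ∃ C, ∀ p ∈ (anisotropicSphere m L : Set (E × ℂ)),
      ‖(a p.1 - p.2 • (1 : Matrix ι ι ℂ))⁻¹‖ ≤ C := by
  simp only [Matrix.nonsing_inv_eq_ringInverse]
  refine (isCompact_anisotropicSphere hm hL).exists_bound_norm_ringInverse_comp
    ((ha.comp continuous_fst).sub (continuous_snd.smul continuous_const)).continuousOn
    fun p hp => isUnit_sub_smul_one hm hhom hLcone hinv hp.1 ?_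
  rw [Prod.mk.eta]
  rintro rfl
  exact zero_ne_one ((anisotropicNorm_zero hm).symm.trans hp.2)

end Symbol

theorem homogeneous_symbol_resolvent_estimate_general (n N : ℕ) (m : ℝ) (hm : 0 < m)
    (a : EuclideanSpace ℝ (Fin n) → Matrix (Fin N) (Fin N) ℂ) (ha : Continuous a)
    (hhom : ∀ c : ℝ, 0 < c → ∀ ξ, a (c • ξ) = (c ^ m : ℝ) • a ξ)
    (L : Set ℂ) (hLclosed : IsClosed L)
    (hLcone : ∀ c : ℝ, 0 < c → ∀ lam ∈ L, (c : ℂ) * lam ∈ L)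
    (hinv : ∀ ξ : EuclideanSpace ℝ (Fin n), ‖ξ‖ = 1 → ∀ lam ∈ L,
      IsUnit (a ξ - lam • (1 : Matrix (Fin N) (Fin N) ℂ))) :
    ∃ C > 0, ∀ (ξ : EuclideanSpace ℝ (Fin n)) (lam : ℂ), lam ∈ L → ¬(ξ = 0 ∧ lam = 0) →
      IsUnit (a ξ - lam • (1 : Matrix (Fin N) (Fin N) ℂ)) ∧
      ‖(a ξ - lam • (1 : Matrix (Fin N) (Fin N) ℂ))⁻¹‖ ≤
        C * (‖ξ‖ + ‖lam‖ ^ (1 / m)) ^ (-m) := by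
  obtain ⟨C, hC⟩ := exists_norm_inv_le_on_anisotropicSphere hm ha hhom hLclosed hLcone hinv
  refine ⟨max C 1, one_pos.trans_le (le_max_right _ _), fun ξ lam hlam hne => ?_⟩
  have hne' : (ξ, lam) ≠ 0 := fun h => hne (Prod.mk_eq_zero.1 h)
  refine ⟨isUnit_sub_smul_one hm hhom hLcone hinv hlam hne', ?_⟩
  change _ ≤ _ * anisotropicNorm m (ξ, lam) ^ (-m)
  set ρ := anisotropicNorm m (ξ, lam)
  have hρ : 0 < ρ := anisotropicNorm_pos hne'
  have hmem : (ρ⁻¹ • ξ, ρ⁻¹ ^ m • lam) ∈ anisotropicSphere m L := by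
    refine ⟨?_, by rw [anisotropicNorm_smul_rpow hm (inv_nonneg.2 hρ.le), inv_mul_cancel₀ hρ.ne']⟩
    rw [Complex.real_smul]
    exact hLcone _ (Real.rpow_pos_of_pos (inv_pos.2 hρ) m) lam hlam
  calc ‖(a ξ - lam • (1 : Matrix (Fin N) (Fin N) ℂ))⁻¹‖
      = ρ⁻¹ ^ m * ‖(a (ρ⁻¹ • ξ) - (ρ⁻¹ ^ m • lam) • (1 : Matrix (Fin N) (Fin N) ℂ))⁻¹‖ :=
        norm_inv_sub_smul_one_eq hhom (inv_pos.2 hρ) ξ lam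
    _ ≤ ρ⁻¹ ^ m * max C 1 := by gcongr; exact (hC _ hmem).trans (le_max_left _ _)
    _ = max C 1 * ρ ^ (-m) := by rw [Real.inv_rpow hρ.le, ← Real.rpow_neg hρ.le, mul_comm]

/-- **Resolvent estimate for homogeneous matrix symbols**: let `a : ℝⁿ → M(N,ℂ)` be
continuous and positively homogeneous of degree `m > 0`, and let `L ⊆ ℂ` be a closed cone
such that `a(ξ) − λI` is invertible for all `|ξ| = 1` and `λ ∈ L`. Then there is `C > 0`
such that for all `(ξ,λ) ≠ (0,0)` with `λ ∈ L`, the matrix `a(ξ) − λI` is invertible and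
`‖(a(ξ) − λI)⁻¹‖ ≤ C (|ξ| + |λ|^{1/m})^{−m}` (operator norm on `ℂᴺ`). -/
theorem homogeneous_symbol_resolvent_estimate (n N : ℕ) (hN : 1 ≤ N) (m : ℝ) (hm : 0 < m)
    (a : EuclideanSpace ℝ (Fin n) → Matrix (Fin N) (Fin N) ℂ) (ha : Continuous a)
    (hhom : ∀ c : ℝ, 0 < c → ∀ ξ, a (c • ξ) = (c ^ m : ℝ) • a ξ)
    (L : Set ℂ) (hLclosed : IsClosed L)
    (hLcone : ∀ c : ℝ, 0 < c → ∀ lam ∈ L, (c : ℂ) * lam ∈ L)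
    (hinv : ∀ ξ : EuclideanSpace ℝ (Fin n), ‖ξ‖ = 1 → ∀ lam ∈ L,
      IsUnit (a ξ - lam • (1 : Matrix (Fin N) (Fin N) ℂ))) :
    ∃ C > 0, ∀ (ξ : EuclideanSpace ℝ (Fin n)) (lam : ℂ), lam ∈ L → ¬(ξ = 0 ∧ lam = 0) →
      IsUnit (a ξ - lam • (1 : Matrix (Fin N) (Fin N) ℂ)) ∧
      ‖(a ξ - lam • (1 : Matrix (Fin N) (Fin N) ℂ))⁻¹‖ ≤
        C * (‖ξ‖ + ‖lam‖ ^ (1 / m)) ^ (-m) :=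
  homogeneous_symbol_resolvent_estimate_general n N m hm a ha hhom L hLclosed hLcone hinv
end

section
/- Let N ≥ 1. The set {a ∈ M(N,ℂ) : every eigenvalue of a has negative real part} and the set {a ∈ M(N,ℂ) : every eigenvalue of a has positive real part}, each equipped with the subspace topology from M(N,ℂ) ≅ ℂ^{N²}, are contractible topological spaces. -/
open Pointwise

private lemma spec_affine {N : ℕ} (a : Matrix (Fin N) (Fin N) ℂ) (w : ℂ) (t u : ℝ)
    (hu : u ≠ 0) :
    spectrum ℂ (t • (algebraMap ℂ (Matrix (Fin N) (Fin N) ℂ) w) + u • a)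
      = ({(t : ℂ) * w} : Set ℂ) + ((u : ℂ)) • spectrum ℂ a := by
  have e1 : t • (algebraMap ℂ (Matrix (Fin N) (Fin N) ℂ) w)
      = algebraMap ℂ (Matrix (Fin N) (Fin N) ℂ) ((t : ℂ) * w) := by
    rw [← algebraMap_smul ℂ (t : ℝ), Algebra.smul_def, ← map_mul]
    norm_num
  have hu' : (u : ℂ) ≠ 0 := by exact_mod_cast hu
  have e2 : u • a = ((Units.mk0 (u : ℂ) hu') : ℂˣ) • a := by
    rw [Units.smul_def, Units.val_mk0, ← algebraMap_smul ℂ (u : ℝ) a]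
    norm_num
  rw [e1, e2, ← spectrum.singleton_add_eq, spectrum.unit_smul_eq_smul]
  rfl

/-- The `N×N` complex matrices all of whose eigenvalues have negative real part, and the
`N×N` complex matrices all of whose eigenvalues have positive real part, are contractible
topological spaces (with the topology of `ℂ^{N²}`). -/
theorem stable_matrices_contractible (N : ℕ) (hN : 1 ≤ N) :
    ContractibleSpace {a : Matrix (Fin N) (Fin N) ℂ // ∀ μ ∈ spectrum ℂ a, μ.re < 0} ∧
    ContractibleSpace {a : Matrix (Fin N) (Fin N) ℂ // ∀ μ ∈ spectrum ℂ a, 0 < μ.re} := by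
  haveI : Nonempty (Fin N) := Fin.pos_iff_nonempty.mp hN
  haveI : Nontrivial (Matrix (Fin N) (Fin N) ℂ) := inferInstance
  have key : ∀ w : ℂ, ∀ a : Matrix (Fin N) (Fin N) ℂ, ∀ t u : ℝ, u ≠ 0 →
      ∀ μ ∈ spectrum ℂ (t • (algebraMap ℂ (Matrix (Fin N) (Fin N) ℂ) w) + u • a),
      ∃ ν ∈ spectrum ℂ a, μ = (t : ℂ) * w + (u : ℂ) * ν := by
    intro w a t u hu μ hμ
    rw [spec_affine a w t u hu] at hμ
    obtain ⟨x, hx, y, hy, hxy⟩ := Set.mem_add.mp hμ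
    obtain ⟨ν, hν, rfl⟩ := hy
    rw [Set.mem_singleton_iff] at hx
    exact ⟨ν, hν, by rw [← hxy, hx]; rfl⟩
  have sp1 : spectrum ℂ (1 : Matrix (Fin N) (Fin N) ℂ) = {1} := spectrum.one_eq
  have spn1 : spectrum ℂ (-1 : Matrix (Fin N) (Fin N) ℂ) = {-1} := by
    rw [show (-1 : Matrix (Fin N) (Fin N) ℂ) = algebraMap ℂ _ (-1) by simp,
      spectrum.scalar_eq]
  constructor
  · have hsc : StarConvex ℝ (-1 : Matrix (Fin N) (Fin N) ℂ)
        {a | ∀ μ ∈ spectrum ℂ a, μ.re < 0} := by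
      intro a ha t u ht hu htu
      rcases eq_or_lt_of_le hu with h0 | h0
      · have ht1 : t = 1 := by linarith
        intro μ hμ
        rw [ht1, ← h0] at hμ
        simp only [one_smul, zero_smul, add_zero, spn1, Set.mem_singleton_iff] at hμ
        simp [hμ]
      · intro μ hμ
        rw [show (-1 : Matrix (Fin N) (Fin N) ℂ) = algebraMap ℂ _ (-1) by simp] at hμ
        obtain ⟨ν, hν, rfl⟩ := key (-1) a t u (ne_of_gt h0) μ hμ
        have hr := ha ν hν
        have : ((t : ℂ) * (-1) + (u : ℂ) * ν).re = -t + u * ν.re := by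
          simp [Complex.add_re, Complex.mul_re]
        rw [this]
        nlinarith
    exact hsc.contractibleSpace ⟨-1, by intro μ hμ; rw [spn1] at hμ; simp_all⟩
  · have hsc : StarConvex ℝ (1 : Matrix (Fin N) (Fin N) ℂ)
        {a | ∀ μ ∈ spectrum ℂ a, 0 < μ.re} := by
      intro a ha t u ht hu htu
      rcases eq_or_lt_of_le hu with h0 | h0
      · have ht1 : t = 1 := by linarith
        intro μ hμ
        rw [ht1, ← h0] at hμ
        simp only [one_smul, zero_smul, add_zero, sp1, Set.mem_singleton_iff] at hμ
        simp [hμ]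
      · intro μ hμ
        rw [show (1 : Matrix (Fin N) (Fin N) ℂ) = algebraMap ℂ _ 1 by simp] at hμ
        obtain ⟨ν, hν, rfl⟩ := key 1 a t u (ne_of_gt h0) μ hμ
        have hr := ha ν hν
        have : ((t : ℂ) * 1 + (u : ℂ) * ν).re = t + u * ν.re := by
          simp [Complex.add_re, Complex.mul_re]
        rw [this]
        nlinarith
    exact hsc.contractibleSpace ⟨1, by intro μ hμ; rw [sp1] at hμ; simp_all⟩
end

section
/- Contractibility of the fibers of the spectral projection map: Let N ≥ 1 and let P₀ ∈ M(N,ℂ) be an idempotent matrix (P₀² = P₀). Then the set F := {a ∈ M(N,iℝ) : E₊(a) = range(P₀) and E₋(a) = ker(P₀)}, equipped with the subspace topology from M(N,ℂ), is nonempty and contractible. -/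
open Module

/-- `E₊(a)`: the sum of the generalized eigenspaces of `a` for eigenvalues with positive
real part. -/
noncomputable def Eplus (N : ℕ) (a : Matrix (Fin N) (Fin N) ℂ) : Submodule ℂ (Fin N → ℂ) :=
  ⨆ μ ∈ {μ : ℂ | 0 < μ.re}, Module.End.maxGenEigenspace (Matrix.toLin' a) μ

/-- `E₋(a)`: the sum of the generalized eigenspaces of `a` for eigenvalues with negative
real part. -/
noncomputable def Eminus (N : ℕ) (a : Matrix (Fin N) (Fin N) ℂ) : Submodule ℂ (Fin N → ℂ) :=
  ⨆ μ ∈ {μ : ℂ | μ.re < 0}, Module.End.maxGenEigenspace (Matrix.toLin' a) μ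

/-- The fiber of the spectral projection map over the idempotent `P₀`: all hyperbolic
matrices `a` with `E₊(a) = range P₀` and `E₋(a) = ker P₀`. -/
def projFiber (N : ℕ) (P₀ : Matrix (Fin N) (Fin N) ℂ) : Set (Matrix (Fin N) (Fin N) ℂ) :=
  {a | (∀ μ ∈ spectrum ℂ a, μ.re ≠ 0) ∧
    Eplus N a = LinearMap.range (Matrix.toLin' P₀) ∧
    Eminus N a = LinearMap.ker (Matrix.toLin' P₀)}

/-!
The reflection `2P₀ - 1` lies in the fiber, and the fiber is star-shaped about it. A matrix `a`
lies in the fiber exactly when it preserves `range P₀` and `ker P₀` with its eigenvalues there in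
the open right, resp. left, half-plane: the spectral subspaces `E₊(a)` and `E₋(a)` then contain
these two complementary subspaces and are independent, so they coincide with them. On `range P₀`
the point `s (2P₀ - 1) + t a` of the segment acts as `s + t a`, with eigenvalues `s + t λ`, and on
`ker P₀` as `-s + t a`; by convexity of the half-planes these stay on the correct side.
-/

namespace Module.End

section Field

variable {K V : Type*} [Field K] [AddCommGroup V] [Module K V]

def spectralSubspace (f : End K V) (S : Set K) : Submodule K V :=
  ⨆ μ ∈ S, f.maxGenEigenspace μ

/-- For `f`-invariant `W`, the eigenvalues of `f.restrict`. -/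
def eigenvaluesOn (f : End K V) (W : Submodule K V) : Set K :=
  {μ | W ⊓ f.eigenspace μ ≠ ⊥}

variable {f g : End K V} {S T : Set K} {W W₁ W₂ : Submodule K V} {μ c : K}

theorem mem_eigenvaluesOn : μ ∈ f.eigenvaluesOn W ↔ ∃ v ∈ W, v ≠ 0 ∧ f v = μ • v := by
  simp only [eigenvaluesOn, Set.mem_ofPred_eq, Submodule.ne_bot_iff, Submodule.mem_inf,
    mem_eigenspace_iff, and_assoc]
  exact exists_congr fun v => and_congr_right fun _ => and_comm

theorem eigenvaluesOn_subset_singleton (hg : ∀ x ∈ W, g x = c • x) :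
    g.eigenvaluesOn W ⊆ {c} := by
  intro μ hμ
  obtain ⟨v, hvW, hv0, hv⟩ := mem_eigenvaluesOn.mp hμ
  have : (μ - c) • v = 0 := by rw [sub_smul, ← hv, hg v hvW, sub_self]
  exact sub_eq_zero.mp ((smul_eq_zero.mp this).resolve_right hv0)

theorem mem_eigenvaluesOn_of_inf_maxGenEigenspace_ne_bot (hW : W ∈ f.invtSubmodule)
    (h : W ⊓ f.maxGenEigenspace μ ≠ ⊥) : μ ∈ f.eigenvaluesOn W := by
  have hrestrict (k : ℕ∞) :
      W ⊓ f.genEigenspace μ k ≠ ⊥ ↔ HasUnifEigenvalue (f.restrict hW) μ k := by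
    rw [Submodule.inf_genEigenspace f W hW,
      (Submodule.map_injective_of_injective W.injective_subtype).ne_iff' (Submodule.map_bot _)]
    rfl
  exact (hrestrict 1).mpr ((hasUnifEigenvalue_iff_hasUnifEigenvalue_one ENat.top_pos).mp
    ((hrestrict ⊤).mp h))

theorem spectralSubspace_mem_invtSubmodule (f : End K V) (S : Set K) :
    f.spectralSubspace S ∈ f.invtSubmodule := by
  rw [mem_invtSubmodule_iff_map_le, spectralSubspace, Submodule.map_iSup]
  refine iSup_mono fun μ => ?_
  rw [Submodule.map_iSup]
  exact iSup_mono fun _ => (mem_invtSubmodule_iff_map_le f).mp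
    (genEigenspace_mem_invtSubmodule f μ ⊤)

theorem disjoint_spectralSubspace (hST : Disjoint S T) :
    Disjoint (f.spectralSubspace S) (f.spectralSubspace T) :=
  f.independent_maxGenEigenspace.disjoint_biSup_biSup hST

theorem spectralSubspace_union (f : End K V) (S T : Set K) :
    f.spectralSubspace (S ∪ T) = f.spectralSubspace S ⊔ f.spectralSubspace T :=
  iSup_union

theorem eigenvaluesOn_spectralSubspace_subset (f : End K V) (S : Set K) :
    f.eigenvaluesOn (f.spectralSubspace S) ⊆ S := by
  intro μ hμ
  by_contra hμS
  have hdisj : Disjoint (f.eigenspace μ) (f.spectralSubspace S) :=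
    (f.independent_maxGenEigenspace.disjoint_biSup hμS).mono_left eigenspace_le_maxGenEigenspace
  exact hμ (inf_comm (f.spectralSubspace S) _ ▸ hdisj.eq_bot)

theorem mem_of_hasEigenvalue (h : f.spectralSubspace S = ⊤) (hμ : f.HasEigenvalue μ) :
    μ ∈ S := by
  have := eigenvaluesOn_spectralSubspace_subset f S
  rw [h] at this
  exact this (by simpa [eigenvaluesOn] using hasEigenvalue_iff.mp hμ)

section IsAlgClosed

variable [IsAlgClosed K] [FiniteDimensional K V]

theorem le_spectralSubspace (hW : W ∈ f.invtSubmodule) (hS : f.eigenvaluesOn W ⊆ S) :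
    W ≤ f.spectralSubspace S := by
  rw [Submodule.eq_iSup_inf_genEigenspace ⊤ hW (iSup_maxGenEigenspace_eq_top f)]
  refine iSup_le fun μ => ?_
  by_cases hμ : W ⊓ f.maxGenEigenspace μ = ⊥
  · simp [hμ]
  · exact inf_le_right.trans
      (le_biSup f.maxGenEigenspace (hS (mem_eigenvaluesOn_of_inf_maxGenEigenspace_ne_bot hW hμ)))

theorem spectralSubspace_eq_of_isCompl (hW : IsCompl W₁ W₂) (hST : Disjoint S T)
    (h₁ : W₁ ∈ f.invtSubmodule) (h₂ : W₂ ∈ f.invtSubmodule)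
    (hS : f.eigenvaluesOn W₁ ⊆ S) (hT : f.eigenvaluesOn W₂ ⊆ T) :
    f.spectralSubspace S = W₁ ∧ f.spectralSubspace T = W₂ := by
  have hle₁ := le_spectralSubspace h₁ hS
  have hle₂ := le_spectralSubspace h₂ hT
  have hdisj := disjoint_spectralSubspace (f := f) hST
  exact ⟨((le_iff_eq_of_codisjoint_of_disjoint hW.codisjoint
      (hdisj.symm.mono_left hle₂)).mp hle₁).symm,
    ((le_iff_eq_of_codisjoint_of_disjoint hW.codisjoint.symm
      (hdisj.mono_left hle₁)).mp hle₂).symm⟩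

end IsAlgClosed

def spectralFiber (S T : Set K) (W₁ W₂ : Submodule K V) : Set (End K V) :=
  {f | (∀ μ, f.HasEigenvalue μ → μ ∈ S ∪ T) ∧
    f.spectralSubspace S = W₁ ∧ f.spectralSubspace T = W₂}

theorem mem_spectralFiber_iff [IsAlgClosed K] [FiniteDimensional K V] (hW : IsCompl W₁ W₂)
    (hST : Disjoint S T) :
    f ∈ spectralFiber S T W₁ W₂ ↔ W₁ ∈ f.invtSubmodule ∧ W₂ ∈ f.invtSubmodule ∧
      f.eigenvaluesOn W₁ ⊆ S ∧ f.eigenvaluesOn W₂ ⊆ T := by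
  constructor
  · rintro ⟨-, rfl, rfl⟩
    exact ⟨spectralSubspace_mem_invtSubmodule f S, spectralSubspace_mem_invtSubmodule f T,
      eigenvaluesOn_spectralSubspace_subset f S, eigenvaluesOn_spectralSubspace_subset f T⟩
  · rintro ⟨h₁, h₂, hS, hT⟩
    obtain ⟨hE₁, hE₂⟩ := spectralSubspace_eq_of_isCompl hW hST h₁ h₂ hS hT
    have htop : f.spectralSubspace (S ∪ T) = ⊤ := by
      rw [spectralSubspace_union, hE₁, hE₂, hW.sup_eq_top]
    exact ⟨fun μ hμ => mem_of_hasEigenvalue htop hμ, hE₁, hE₂⟩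

end Field

section Complex

variable {V : Type*} [AddCommGroup V] [Module ℂ V] {f g : End ℂ V} {W : Submodule ℂ V} {c : ℂ}
  {s t : ℝ}

theorem eigenvaluesOn_subset_of_eqOn_segment {C : Set ℂ} (hC : Convex ℝ C) (hc : c ∈ C)
    (hf : f.eigenvaluesOn W ⊆ C) (hs : 0 ≤ s) (ht : 0 ≤ t) (hst : s + t = 1)
    (hg : ∀ x ∈ W, g x = ((s : ℂ) * c) • x + (t : ℂ) • f x) : g.eigenvaluesOn W ⊆ C := by
  intro μ hμ
  rcases ht.eq_or_lt with rfl | ht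
  · obtain rfl : s = 1 := by linarith
    have hgc : ∀ x ∈ W, g x = c • x := fun x hx => by simpa using hg x hx
    rwa [eigenvaluesOn_subset_singleton hgc hμ]
  obtain ⟨v, hvW, hv0, hv⟩ := mem_eigenvaluesOn.mp hμ
  set ν := (t : ℂ)⁻¹ * (μ - s * c)
  have htC : (t : ℂ) ≠ 0 := Complex.ofReal_ne_zero.mpr ht.ne'
  have hfv : f v = ν • v := by
    rw [mul_smul, sub_smul, ← hv, hg v hvW, add_sub_cancel_left, smul_smul, inv_mul_cancel₀ htC,
      one_smul]
  have hν : ν ∈ C := hf (mem_eigenvaluesOn.mpr ⟨v, hvW, hv0, hfv⟩)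
  have hμν : μ = s • c + t • ν := by
    simp only [ν, Complex.real_smul]
    field_simp
    ring
  exact hμν ▸ hC hc hν hs ht.le hst

section Fiber

variable [FiniteDimensional ℂ V] {S T : Set ℂ} {W₁ W₂ : Submodule ℂ V} {c₁ c₂ : ℂ}
  {r : End ℂ V}

theorem mem_spectralFiber_of_eqOn_smul (hW : IsCompl W₁ W₂) (hST : Disjoint S T)
    (hc₁ : c₁ ∈ S) (hc₂ : c₂ ∈ T) (hr₁ : ∀ x ∈ W₁, r x = c₁ • x)
    (hr₂ : ∀ x ∈ W₂, r x = c₂ • x) : r ∈ spectralFiber S T W₁ W₂ :=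
  (mem_spectralFiber_iff hW hST).mpr
    ⟨fun x hx => Submodule.mem_comap.mpr (by rw [hr₁ x hx]; exact W₁.smul_mem c₁ hx),
      fun x hx => Submodule.mem_comap.mpr (by rw [hr₂ x hx]; exact W₂.smul_mem c₂ hx),
      (eigenvaluesOn_subset_singleton hr₁).trans (Set.singleton_subset_iff.mpr hc₁),
      (eigenvaluesOn_subset_singleton hr₂).trans (Set.singleton_subset_iff.mpr hc₂)⟩

theorem segment_mem_spectralFiber (hW : IsCompl W₁ W₂) (hST : Disjoint S T)
    (hS : Convex ℝ S) (hT : Convex ℝ T) (hc₁ : c₁ ∈ S) (hc₂ : c₂ ∈ T)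
    (hr₁ : ∀ x ∈ W₁, r x = c₁ • x) (hr₂ : ∀ x ∈ W₂, r x = c₂ • x)
    (hf : f ∈ spectralFiber S T W₁ W₂) (hs : 0 ≤ s) (ht : 0 ≤ t) (hst : s + t = 1) :
    (s : ℂ) • r + (t : ℂ) • f ∈ spectralFiber S T W₁ W₂ := by
  obtain ⟨hf₁, hf₂, hfS, hfT⟩ := (mem_spectralFiber_iff hW hST).mp hf
  have hg {W : Submodule ℂ V} {c : ℂ} (hr : ∀ x ∈ W, r x = c • x) (x : V) (hx : x ∈ W) :
      ((s : ℂ) • r + (t : ℂ) • f) x = ((s : ℂ) * c) • x + (t : ℂ) • f x := by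
    rw [LinearMap.add_apply, LinearMap.smul_apply, LinearMap.smul_apply, hr x hx, smul_smul]
  have hinv {W : Submodule ℂ V} {c : ℂ} (hr : ∀ x ∈ W, r x = c • x)
      (hfW : W ∈ f.invtSubmodule) : W ∈ ((s : ℂ) • r + (t : ℂ) • f).invtSubmodule :=
    fun x hx => Submodule.mem_comap.mpr
      (by rw [hg hr x hx]; exact W.add_mem (W.smul_mem _ hx) (W.smul_mem _ (hfW hx)))
  exact (mem_spectralFiber_iff hW hST).mpr ⟨hinv hr₁ hf₁, hinv hr₂ hf₂,
    eigenvaluesOn_subset_of_eqOn_segment hS hc₁ hfS hs ht hst (hg hr₁),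
    eigenvaluesOn_subset_of_eqOn_segment hT hc₂ hfT hs ht hst (hg hr₂)⟩

end Fiber

end Complex

end Module.End

namespace LinearMap

theorem IsIdempotentElem.two_smul_sub_one_apply_of_mem_range {R M : Type*} [CommRing R]
    [AddCommGroup M] [Module R M] {p : End R M} (hp : IsIdempotentElem p) {x : M}
    (hx : x ∈ range p) : ((2 : R) • p - 1) x = (1 : R) • x := by
  rw [sub_apply, smul_apply, (IsIdempotentElem.mem_range_iff hp).mp hx, Module.End.one_apply,
    one_smul, two_smul, add_sub_cancel_right]

theorem two_smul_sub_one_apply_of_mem_ker {R M : Type*} [CommRing R] [AddCommGroup M]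
    [Module R M] {p : End R M} {x : M} (hx : x ∈ ker p) : ((2 : R) • p - 1) x = (-1 : R) • x := by
  rw [sub_apply, smul_apply, mem_ker.mp hx, smul_zero, Module.End.one_apply, zero_sub, neg_one_smul]

end LinearMap

open Module.End LinearMap

theorem projFiber_eq_preimage (N : ℕ) (P₀ : Matrix (Fin N) (Fin N) ℂ) :
    projFiber N P₀ = Matrix.toLin' ⁻¹'
      spectralFiber {μ : ℂ | 0 < μ.re} {μ | μ.re < 0} (range (Matrix.toLin' P₀))
        (ker (Matrix.toLin' P₀)) := by
  ext a
  simp only [projFiber, spectralFiber, Set.mem_preimage, Set.mem_ofPred_eq, Set.mem_union,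
    hasEigenvalue_iff_mem_spectrum, Matrix.spectrum_toLin', ne_iff_lt_or_gt, or_comm]
  rfl

theorem projFiber_nonempty_contractible_general (N : ℕ)
    (P₀ : Matrix (Fin N) (Fin N) ℂ) (hP₀ : P₀ * P₀ = P₀) :
    (projFiber N P₀).Nonempty ∧ ContractibleSpace ↥(projFiber N P₀) := by
  have hp : IsIdempotentElem (Matrix.toLin' P₀) := by
    rw [IsIdempotentElem, Module.End.mul_eq_comp, ← Matrix.toLin'_mul, hP₀]
  have hST : Disjoint {μ : ℂ | 0 < μ.re} {μ | μ.re < 0} :=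
    Set.disjoint_left.mpr fun μ (h₁ : 0 < μ.re) (h₂ : μ.re < 0) => lt_asymm h₁ h₂
  set A₀ : Matrix (Fin N) (Fin N) ℂ := (2 : ℂ) • P₀ - 1
  have hA₀ : Matrix.toLin' A₀ = (2 : ℂ) • Matrix.toLin' P₀ - 1 := by
    rw [map_sub, map_smul, Matrix.toLin'_one, Module.End.one_eq_id]
  have hr₁ : ∀ x ∈ range (Matrix.toLin' P₀), Matrix.toLin' A₀ x = (1 : ℂ) • x :=
    hA₀ ▸ fun x hx => hp.two_smul_sub_one_apply_of_mem_range hx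
  have hr₂ : ∀ x ∈ ker (Matrix.toLin' P₀), Matrix.toLin' A₀ x = (-1 : ℂ) • x :=
    hA₀ ▸ fun x hx => two_smul_sub_one_apply_of_mem_ker hx
  have hA₀_mem : A₀ ∈ projFiber N P₀ := by
    rw [projFiber_eq_preimage]
    exact mem_spectralFiber_of_eqOn_smul hp.isCompl hST (by simp) (by simp) hr₁ hr₂
  have hstar : StarConvex ℝ A₀ (projFiber N P₀) := by
    rw [projFiber_eq_preimage]
    intro a ha s t hs ht hst
    rw [Set.mem_preimage, map_add, ← Complex.coe_smul, ← Complex.coe_smul, map_smul, map_smul]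
    exact segment_mem_spectralFiber hp.isCompl hST (convex_halfSpace_re_gt 0)
      (convex_halfSpace_re_lt 0) (by simp) (by simp) hr₁ hr₂ ha hs ht hst
  exact ⟨⟨A₀, hA₀_mem⟩, hstar.contractibleSpace ⟨A₀, hA₀_mem⟩⟩

/-- **Contractibility of the fibers of the spectral projection map**: for every idempotent
`P₀ ∈ M(N,ℂ)`, the set of hyperbolic matrices `a` with `E₊(a) = range P₀` and
`E₋(a) = ker P₀` is nonempty and contractible. -/
theorem projFiber_nonempty_contractible (N : ℕ) (hN : 1 ≤ N)
    (P₀ : Matrix (Fin N) (Fin N) ℂ) (hP₀ : P₀ * P₀ = P₀) :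
    (projFiber N P₀).Nonempty ∧ ContractibleSpace ↥(projFiber N P₀) :=
  projFiber_nonempty_contractible_general N P₀ hP₀
end

section
/- Homogeneity of the sectorial symbol integral: Let m > 0 and N ≥ 1. Let a : ℝⁿ → M(N,ℂ) be continuous with a(cξ) = c^m a(ξ) for all c > 0, ξ ∈ ℝⁿ. Let α₁, α₂ ∈ ℝ with 0 < α₁ − α₂ < 2π, set θ := α₁ − α₂, and let R > 0. Assume that for every ξ ∈ ℝⁿ with |ξ| ≥ 1, the matrix a(ξ) − λ·I is invertible for all λ ∈ ℂ with |λ| ≤ R and for all λ of the form λ = r e^{iα_j} with r > 0, j = 1, 2. For |ξ| ≥ 1 define b(ξ) := −e^{iα₁} ∫_R^∞ (r e^{iα₁})^{−1} (a(ξ) − r e^{iα₁})^{−1} dr − i ∫_0^θ (a(ξ) − R e^{i(α₁−t)})^{−1} dt + e^{iα₂} ∫_R^∞ (r e^{iα₂})^{−1} (a(ξ) − r e^{iα₂})^{−1} dr (the contour integral ∫_{Γ₊} λ^{−1}(a(ξ)−λ)^{−1} dλ over the spectral cut curve consisting of the ray of argument α₁ traversed inward from infinity to radius R, the arc of radius R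 from angle α₁ clockwise to α₂, and the ray of argument α₂ traversed outward). Then the two improper integrals converge absolutely for every |ξ| ≥ 1, and b(cξ) = c^{−m} b(ξ) for all c ≥ 1 and all ξ with |ξ| ≥ 1. -/
open MeasureTheory
open scoped Matrix.Norms.L2Operator

/-- The contour integral `∫_{Γ₊} λ^{−1}(a(ξ)−λ)^{−1} dλ` of the resolvent of the
principal symbol `a` over the spectral cut curve `Γ₊` made of the ray of argument `α₁`
(traversed inward from infinity to radius `R`), the arc of radius `R` from angle `α₁`
clockwise to `α₂`, and the ray of argument `α₂` (traversed outward). -/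
noncomputable def sectorialSymbolIntegral (n N : ℕ)
    (a : EuclideanSpace ℝ (Fin n) → Matrix (Fin N) (Fin N) ℂ)
    (α₁ α₂ R : ℝ) (ξ : EuclideanSpace ℝ (Fin n)) : Matrix (Fin N) (Fin N) ℂ :=
  -(Complex.exp (Complex.I * (α₁ : ℂ)) •
      ∫ r in Set.Ioi R, ((r : ℂ) * Complex.exp (Complex.I * (α₁ : ℂ)))⁻¹ •
        (a ξ - ((r : ℂ) * Complex.exp (Complex.I * (α₁ : ℂ))) •
          (1 : Matrix (Fin N) (Fin N) ℂ))⁻¹)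
    - Complex.I •
      (∫ t in (0 : ℝ)..(α₁ - α₂),
        (a ξ - ((R : ℂ) * Complex.exp (Complex.I * ((α₁ - t : ℝ) : ℂ))) •
          (1 : Matrix (Fin N) (Fin N) ℂ))⁻¹)
    + Complex.exp (Complex.I * (α₂ : ℂ)) •
      ∫ r in Set.Ioi R, ((r : ℂ) * Complex.exp (Complex.I * (α₂ : ℂ)))⁻¹ •
        (a ξ - ((r : ℂ) * Complex.exp (Complex.I * (α₂ : ℂ))) •
          (1 : Matrix (Fin N) (Fin N) ℂ))⁻¹


/-! Put `κ = c ^ m ≥ 1`, so that `a (c • ξ) = κ • a ξ`. The substitution `λ = κ μ` turns the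
contour integral of `κ • a ξ` at radius `R` into `κ⁻¹` times that of `a ξ` at radius `R / κ`.
In the coordinate `λ = exp z` one has `λ⁻¹ dλ = dz`, and the part of the contour of radius `R / κ`
that differs from the one of radius `R` becomes three sides of a rectangle whose fourth side is
the arc of radius `R`. The resolvent exists on the disc of radius `R`, so `z ↦ (a ξ - exp z)⁻¹` is
holomorphic on that rectangle and Cauchy's theorem moves the radius back to `R`. The ray
integrals converge because `λ⁻¹ (A - λ)⁻¹ = O(|λ|⁻²)` at infinity. -/

open Filter Asymptotics Set

namespace Matrix

theorem inv_smul_of_ne_zero {n K : Type*} [Fintype n] [DecidableEq n] [Field K]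
    (A : Matrix n n K) {κ : K} (hκ : κ ≠ 0) : (κ • A)⁻¹ = κ⁻¹ • A⁻¹ := by
  by_cases hA : IsUnit A.det
  · exact Matrix.inv_smul' A (Units.mk0 κ hκ) hA
  · have hκA : ¬IsUnit (κ • A).det := by
      rwa [Matrix.det_smul, IsUnit.mul_iff, not_and_or, or_iff_right]
      exact not_not.mpr ((isUnit_iff_ne_zero.mpr hκ).pow _)
    rw [Matrix.nonsing_inv_apply_not_isUnit _ hA, Matrix.nonsing_inv_apply_not_isUnit _ hκA,
      smul_zero]

theorem inv_smul_sub_smul_one {n K : Type*} [Fintype n] [DecidableEq n] [Field K]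
    (A : Matrix n n K) {κ : K} (hκ : κ ≠ 0) (z : K) :
    (κ • A - z • (1 : Matrix n n K))⁻¹ = κ⁻¹ • (A - (z / κ) • (1 : Matrix n n K))⁻¹ := by
  rw [← inv_smul_of_ne_zero _ hκ, smul_sub, smul_smul, mul_div_cancel₀ _ hκ]

end Matrix

namespace SectorialContour

variable {ι : Type*} [Fintype ι] [DecidableEq ι]

theorem inv_sub_smul_one_eq_resolvent (A : Matrix ι ι ℂ) (z : ℂ) :
    (A - z • (1 : Matrix ι ι ℂ))⁻¹ = resolvent (-A) (-z) := by
  rw [Matrix.nonsing_inv_eq_ringInverse, resolvent, Algebra.algebraMap_eq_smul_one, neg_smul,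
    sub_neg_eq_add, neg_add_eq_sub]

theorem differentiableAt_inv_sub_smul_one {A : Matrix ι ι ℂ} {z : ℂ}
    (h : IsUnit (A - z • (1 : Matrix ι ι ℂ))) :
    DifferentiableAt ℂ (fun w : ℂ => (A - w • (1 : Matrix ι ι ℂ))⁻¹) z := by
  simp only [Matrix.nonsing_inv_eq_ringInverse]
  exact ((differentiableAt_const A).sub (differentiableAt_id.smul_const _)).inverse h

noncomputable def rayIntegrand (A : Matrix ι ι ℂ) (α r : ℝ) : Matrix ι ι ℂ :=
  ((r : ℂ) * Complex.exp (Complex.I * α))⁻¹ •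
    (A - ((r : ℂ) * Complex.exp (Complex.I * α)) • (1 : Matrix ι ι ℂ))⁻¹

theorem norm_ofReal_mul_exp_I_mul (r α : ℝ) :
    ‖(r : ℂ) * Complex.exp (Complex.I * α)‖ = |r| := by
  rw [norm_mul, Complex.norm_exp_I_mul_ofReal, Complex.norm_real, mul_one, Real.norm_eq_abs]

theorem continuousOn_rayIntegrand {A : Matrix ι ι ℂ} {α : ℝ}
    (hu : ∀ r : ℝ, 0 < r →
      IsUnit (A - ((r : ℂ) * Complex.exp (Complex.I * α)) • (1 : Matrix ι ι ℂ))) :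
    ContinuousOn (rayIntegrand A α) (Ioi 0) := by
  intro r hr
  have hℓ : Continuous fun r : ℝ => (r : ℂ) * Complex.exp (Complex.I * α) := by fun_prop
  have hne : (r : ℂ) * Complex.exp (Complex.I * α) ≠ 0 :=
    mul_ne_zero (Complex.ofReal_ne_zero.mpr (ne_of_gt hr)) (Complex.exp_ne_zero _)
  exact ((hℓ.continuousAt.inv₀ hne).smul
    ((differentiableAt_inv_sub_smul_one (hu r hr)).continuousAt.comp
      (f := fun r : ℝ => (r : ℂ) * Complex.exp (Complex.I * α)) hℓ.continuousAt))
    |>.continuousWithinAt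

theorem rayIntegrand_isBigO (A : Matrix ι ι ℂ) (α : ℝ) :
    rayIntegrand A α =O[atTop] fun r => r ^ (-2 : ℝ) := by
  set e := Complex.exp (Complex.I * α)
  have hℓ : Tendsto (fun r : ℝ => -((r : ℂ) * e)) atTop (Bornology.cobounded ℂ) := by
    refine tendsto_norm_atTop_iff_cobounded.mp ?_
    simpa only [norm_neg, e, norm_ofReal_mul_exp_I_mul] using tendsto_abs_atTop_atTop
  have hinv : (fun r : ℝ => ((r : ℂ) * e)⁻¹) =O[atTop] fun r => r⁻¹ :=
    isBigO_of_le _ fun r => by simp [e]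
  have hres : (fun r : ℝ => (A - ((r : ℂ) * e) • (1 : Matrix ι ι ℂ))⁻¹) =O[atTop]
      fun r => r⁻¹ := by
    have h := (spectrum.resolvent_isBigO_inv (-A)).comp_tendsto hℓ
    simp only [Function.comp_def, ← inv_sub_smul_one_eq_resolvent, inv_neg] at h
    exact (isBigO_neg_right.mp h).trans hinv
  refine (hinv.smul hres).trans_eventuallyEq ?_
  filter_upwards [eventually_gt_atTop 0] with r hr
  rw [Real.rpow_neg hr.le, smul_eq_mul, ← mul_inv, ← sq]
  norm_cast

theorem integrableOn_rayIntegrand {A : Matrix ι ι ℂ} {α R : ℝ} (hR : 0 < R)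
    (hu : ∀ r : ℝ, 0 < r →
      IsUnit (A - ((r : ℂ) * Complex.exp (Complex.I * α)) • (1 : Matrix ι ι ℂ))) :
    IntegrableOn (rayIntegrand A α) (Ioi R) := by
  have hloc : LocallyIntegrableOn (rayIntegrand A α) (Ici R) :=
    ((continuousOn_rayIntegrand hu).mono (Ici_subset_Ioi.mpr hR)).locallyIntegrableOn
      measurableSet_Ici
  exact (hloc.integrableOn_of_isBigO_atTop (rayIntegrand_isBigO A α)
    (integrableAtFilter_rpow_atTop_iff.mpr (by norm_num))).mono_set Ioi_subset_Ici_self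

theorem rayIntegrand_smul (A : Matrix ι ι ℂ) (α : ℝ) {κ : ℝ} (hκ : 0 < κ) (r : ℝ) :
    rayIntegrand (κ • A) α r = (κ ^ 2)⁻¹ • rayIntegrand A α (κ⁻¹ * r) := by
  have hκ' : (κ : ℂ) ≠ 0 := Complex.ofReal_ne_zero.mpr hκ.ne'
  have hscale : ((κ⁻¹ * r : ℝ) : ℂ) * Complex.exp (Complex.I * α) =
      (r : ℂ) * Complex.exp (Complex.I * α) / κ := by
    push_cast; ring
  rw [rayIntegrand, rayIntegrand, ← Complex.coe_smul, Matrix.inv_smul_sub_smul_one _ hκ', hscale,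
    ← Complex.coe_smul, smul_smul, smul_smul]
  congr 1
  push_cast
  field_simp

theorem setIntegral_rayIntegrand_smul (A : Matrix ι ι ℂ) (α R : ℝ) {κ : ℝ} (hκ : 0 < κ) :
    ∫ r in Ioi R, rayIntegrand (κ • A) α r = κ⁻¹ • ∫ r in Ioi (R / κ), rayIntegrand A α r := by
  simp_rw [rayIntegrand_smul A α hκ]
  rw [integral_smul, integral_comp_mul_left_Ioi (rayIntegrand A α) R (inv_pos.mpr hκ),
    smul_smul, inv_inv, div_eq_inv_mul]
  congr 1
  field_simp

noncomputable def arcIntegrand (A : Matrix ι ι ℂ) (R θ : ℝ) : Matrix ι ι ℂ :=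
  (A - ((R : ℂ) * Complex.exp (Complex.I * θ)) • (1 : Matrix ι ι ℂ))⁻¹

theorem arcIntegrand_smul (A : Matrix ι ι ℂ) {κ : ℝ} (hκ : 0 < κ) (R θ : ℝ) :
    arcIntegrand (κ • A) R θ = κ⁻¹ • arcIntegrand A (R / κ) θ := by
  have hκ' : (κ : ℂ) ≠ 0 := Complex.ofReal_ne_zero.mpr hκ.ne'
  rw [arcIntegrand, arcIntegrand, ← Complex.coe_smul, Matrix.inv_smul_sub_smul_one _ hκ',
    ← Complex.coe_smul]
  push_cast
  ring_nf

noncomputable def sectorialContourIntegral (A : Matrix ι ι ℂ) (α₁ α₂ R : ℝ) : Matrix ι ι ℂ :=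
  -(Complex.exp (Complex.I * α₁) • ∫ r in Ioi R, rayIntegrand A α₁ r)
    - Complex.I • (∫ t in (0 : ℝ)..(α₁ - α₂), arcIntegrand A R (α₁ - t))
    + Complex.exp (Complex.I * α₂) • ∫ r in Ioi R, rayIntegrand A α₂ r

theorem sectorialContourIntegral_smul (A : Matrix ι ι ℂ) (α₁ α₂ R : ℝ) {κ : ℝ} (hκ : 0 < κ) :
    sectorialContourIntegral (κ • A) α₁ α₂ R =
      κ⁻¹ • sectorialContourIntegral A α₁ α₂ (R / κ) := by
  simp only [sectorialContourIntegral, setIntegral_rayIntegrand_smul A _ R hκ,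
    arcIntegrand_smul A hκ, intervalIntegral.integral_smul]
  module

theorem integral_inv_sub_exp_smul_one_horizontal (A : Matrix ι ι ℂ) (α a b : ℝ) :
    ∫ x in a..b, (A - Complex.exp (x + α * Complex.I) • (1 : Matrix ι ι ℂ))⁻¹ =
      Complex.exp (Complex.I * α) • ∫ r in Real.exp a..Real.exp b, rayIntegrand A α r := by
  have hcov := intervalIntegral.integral_deriv_smul_comp_of_deriv_nonneg (a := a) (b := b)
    (g := rayIntegrand A α)
    Real.continuous_exp.continuousOn (fun x _ => Real.hasDerivAt_exp x)
    (fun x _ => (Real.exp_pos x).le)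
  rw [← hcov, ← intervalIntegral.integral_smul]
  refine intervalIntegral.integral_congr fun x _ => ?_
  have hexp :
      Complex.exp (x + α * Complex.I) = (Real.exp x : ℂ) * Complex.exp (Complex.I * α) := by
    rw [Complex.exp_add, Complex.ofReal_exp, mul_comm (α : ℂ)]
  have hne : (Real.exp x : ℂ) * Complex.exp (Complex.I * α) ≠ 0 := by
    rw [← hexp]; exact Complex.exp_ne_zero _
  rw [Function.comp_apply, rayIntegrand, ← hexp, ← Complex.coe_smul, smul_smul, smul_smul, hexp,
    mul_comm (Complex.exp _), mul_inv_cancel₀ hne, one_smul]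

theorem integral_inv_sub_exp_smul_one_vertical (A : Matrix ι ι ℂ) {ρ : ℝ} (hρ : 0 < ρ)
    (α₁ α₂ : ℝ) :
    ∫ y in α₂..α₁, (A - Complex.exp (Real.log ρ + y * Complex.I) • (1 : Matrix ι ι ℂ))⁻¹ =
      ∫ t in (0 : ℝ)..(α₁ - α₂), arcIntegrand A ρ (α₁ - t) := by
  rw [intervalIntegral.integral_comp_sub_left (arcIntegrand A ρ), sub_sub_cancel, sub_zero]
  refine intervalIntegral.integral_congr fun y _ => ?_
  rw [arcIntegrand, Complex.exp_add, ← Complex.ofReal_exp, Real.exp_log hρ, mul_comm (y : ℂ)]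

theorem integral_boundary_rect_inv_sub_exp_smul_one (A : Matrix ι ι ℂ) {a b : ℝ} (hab : a ≤ b)
    (α₁ α₂ : ℝ) (hdisc : ∀ w : ℂ, ‖w‖ ≤ Real.exp b → IsUnit (A - w • (1 : Matrix ι ι ℂ))) :
    (∫ x in a..b, (A - Complex.exp (x + α₂ * Complex.I) • (1 : Matrix ι ι ℂ))⁻¹) -
      (∫ x in a..b, (A - Complex.exp (x + α₁ * Complex.I) • (1 : Matrix ι ι ℂ))⁻¹) +
      Complex.I • (∫ y in α₂..α₁, (A - Complex.exp (b + y * Complex.I) • (1 : Matrix ι ι ℂ))⁻¹) -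
      Complex.I • (∫ y in α₂..α₁, (A - Complex.exp (a + y * Complex.I) • (1 : Matrix ι ι ℂ))⁻¹)
      = 0 := by
  refine Complex.integral_boundary_rect_eq_zero_of_differentiableOn
    (fun z => (A - Complex.exp z • (1 : Matrix ι ι ℂ))⁻¹) ⟨a, α₂⟩ ⟨b, α₁⟩ fun z hz => ?_
  have hunit : IsUnit (A - Complex.exp z • (1 : Matrix ι ι ℂ)) := by
    refine hdisc _ ?_
    rw [Complex.norm_exp]
    exact Real.exp_le_exp.mpr (hz.1.2.trans (sup_le hab le_rfl))
  exact ((differentiableAt_inv_sub_smul_one hunit).comp z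
    Complex.differentiableAt_exp).differentiableWithinAt

theorem sectorialContourIntegral_eq_of_le {A : Matrix ι ι ℂ} {α₁ α₂ R' R : ℝ} (hR' : 0 < R')
    (hR'R : R' ≤ R) (hdisc : ∀ w : ℂ, ‖w‖ ≤ R → IsUnit (A - w • (1 : Matrix ι ι ℂ)))
    (hray₁ : ∀ r : ℝ, 0 < r →
      IsUnit (A - ((r : ℂ) * Complex.exp (Complex.I * α₁)) • (1 : Matrix ι ι ℂ)))
    (hray₂ : ∀ r : ℝ, 0 < r →
      IsUnit (A - ((r : ℂ) * Complex.exp (Complex.I * α₂)) • (1 : Matrix ι ι ℂ))) :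
    sectorialContourIntegral A α₁ α₂ R' = sectorialContourIntegral A α₁ α₂ R := by
  have hR : 0 < R := hR'.trans_le hR'R
  have hsplit₁ := intervalIntegral.integral_interval_add_Ioi
    (integrableOn_rayIntegrand hR' hray₁) (integrableOn_rayIntegrand hR hray₁)
  have hsplit₂ := intervalIntegral.integral_interval_add_Ioi
    (integrableOn_rayIntegrand hR' hray₂) (integrableOn_rayIntegrand hR hray₂)
  have hcauchy := integral_boundary_rect_inv_sub_exp_smul_one A (Real.log_le_log hR' hR'R) α₁ α₂
    (by rwa [Real.exp_log hR])
  rw [integral_inv_sub_exp_smul_one_horizontal, integral_inv_sub_exp_smul_one_horizontal,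
    integral_inv_sub_exp_smul_one_vertical A hR, integral_inv_sub_exp_smul_one_vertical A hR',
    Real.exp_log hR', Real.exp_log hR] at hcauchy
  rw [sectorialContourIntegral, sectorialContourIntegral, ← hsplit₁, ← hsplit₂]
  linear_combination (norm := module) hcauchy

end SectorialContour

theorem sectorialSymbolIntegral_eq_sectorialContourIntegral (n N : ℕ)
    (a : EuclideanSpace ℝ (Fin n) → Matrix (Fin N) (Fin N) ℂ) (α₁ α₂ R : ℝ)
    (ξ : EuclideanSpace ℝ (Fin n)) :
    sectorialSymbolIntegral n N a α₁ α₂ R ξ =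
      SectorialContour.sectorialContourIntegral (a ξ) α₁ α₂ R := rfl

theorem sectorialSymbolIntegral_homogeneous_general (n N : ℕ) (m : ℝ) (hm : 0 < m)
    (a : EuclideanSpace ℝ (Fin n) → Matrix (Fin N) (Fin N) ℂ)
    (hhom : ∀ c : ℝ, 0 < c → ∀ ξ, a (c • ξ) = (c ^ m : ℝ) • a ξ)
    (α₁ α₂ : ℝ)
    (R : ℝ) (hR : 0 < R)
    (hdisc : ∀ ξ : EuclideanSpace ℝ (Fin n), 1 ≤ ‖ξ‖ → ∀ lam : ℂ, ‖lam‖ ≤ R →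
      IsUnit (a ξ - lam • (1 : Matrix (Fin N) (Fin N) ℂ)))
    (hray : ∀ ξ : EuclideanSpace ℝ (Fin n), 1 ≤ ‖ξ‖ → ∀ r : ℝ, 0 < r →
      IsUnit (a ξ - ((r : ℂ) * Complex.exp (Complex.I * (α₁ : ℂ))) •
        (1 : Matrix (Fin N) (Fin N) ℂ)) ∧
      IsUnit (a ξ - ((r : ℂ) * Complex.exp (Complex.I * (α₂ : ℂ))) •
        (1 : Matrix (Fin N) (Fin N) ℂ))) :
    ∀ ξ : EuclideanSpace ℝ (Fin n), 1 ≤ ‖ξ‖ →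
      IntegrableOn (fun r : ℝ => ((r : ℂ) * Complex.exp (Complex.I * (α₁ : ℂ)))⁻¹ •
          (a ξ - ((r : ℂ) * Complex.exp (Complex.I * (α₁ : ℂ))) •
            (1 : Matrix (Fin N) (Fin N) ℂ))⁻¹) (Set.Ioi R) volume ∧
      IntegrableOn (fun r : ℝ => ((r : ℂ) * Complex.exp (Complex.I * (α₂ : ℂ)))⁻¹ •
          (a ξ - ((r : ℂ) * Complex.exp (Complex.I * (α₂ : ℂ))) •
            (1 : Matrix (Fin N) (Fin N) ℂ))⁻¹) (Set.Ioi R) volume ∧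
      ∀ c : ℝ, 1 ≤ c →
        sectorialSymbolIntegral n N a α₁ α₂ R (c • ξ) =
          (c ^ (-m) : ℝ) • sectorialSymbolIntegral n N a α₁ α₂ R ξ := by
  intro ξ hξ
  have hray₁ := fun r hr => (hray ξ hξ r hr).1
  have hray₂ := fun r hr => (hray ξ hξ r hr).2
  refine ⟨SectorialContour.integrableOn_rayIntegrand hR hray₁,
    SectorialContour.integrableOn_rayIntegrand hR hray₂, fun c hc => ?_⟩
  have hc₀ : 0 < c := one_pos.trans_le hc
  have hcm : 0 < c ^ m := Real.rpow_pos_of_pos hc₀ m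
  rw [sectorialSymbolIntegral_eq_sectorialContourIntegral, hhom c hc₀ ξ,
    SectorialContour.sectorialContourIntegral_smul _ _ _ _ hcm,
    SectorialContour.sectorialContourIntegral_eq_of_le (div_pos hR hcm)
      (div_le_self hR.le (Real.one_le_rpow hc hm.le)) (hdisc ξ hξ) hray₁ hray₂,
    Real.rpow_neg hc₀.le, sectorialSymbolIntegral_eq_sectorialContourIntegral]

/-- **Homogeneity of the sectorial symbol integral**: for a continuous symbol
`a : ℝⁿ → M(N,ℂ)`, positively homogeneous of degree `m > 0`, whose resolvent exists along
the two rays of arguments `α₁, α₂` and on the disc of radius `R` (for `|ξ| ≥ 1`), the two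
improper ray integrals of `λ^{−1}(a(ξ)−λ)^{−1}` converge absolutely and the contour
integral `b(ξ) = ∫_{Γ₊} λ^{−1}(a(ξ)−λ)^{−1} dλ` satisfies `b(cξ) = c^{−m} b(ξ)` for all
`c ≥ 1` and `|ξ| ≥ 1`. -/
theorem sectorialSymbolIntegral_homogeneous (n N : ℕ) (hN : 1 ≤ N) (m : ℝ) (hm : 0 < m)
    (a : EuclideanSpace ℝ (Fin n) → Matrix (Fin N) (Fin N) ℂ) (ha : Continuous a)
    (hhom : ∀ c : ℝ, 0 < c → ∀ ξ, a (c • ξ) = (c ^ m : ℝ) • a ξ)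
    (α₁ α₂ : ℝ) (hangle₁ : 0 < α₁ - α₂) (hangle₂ : α₁ - α₂ < 2 * Real.pi)
    (R : ℝ) (hR : 0 < R)
    (hdisc : ∀ ξ : EuclideanSpace ℝ (Fin n), 1 ≤ ‖ξ‖ → ∀ lam : ℂ, ‖lam‖ ≤ R →
      IsUnit (a ξ - lam • (1 : Matrix (Fin N) (Fin N) ℂ)))
    (hray : ∀ ξ : EuclideanSpace ℝ (Fin n), 1 ≤ ‖ξ‖ → ∀ r : ℝ, 0 < r →
      IsUnit (a ξ - ((r : ℂ) * Complex.exp (Complex.I * (α₁ : ℂ))) •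
        (1 : Matrix (Fin N) (Fin N) ℂ)) ∧
      IsUnit (a ξ - ((r : ℂ) * Complex.exp (Complex.I * (α₂ : ℂ))) •
        (1 : Matrix (Fin N) (Fin N) ℂ))) :
    ∀ ξ : EuclideanSpace ℝ (Fin n), 1 ≤ ‖ξ‖ →
      IntegrableOn (fun r : ℝ => ((r : ℂ) * Complex.exp (Complex.I * (α₁ : ℂ)))⁻¹ •
          (a ξ - ((r : ℂ) * Complex.exp (Complex.I * (α₁ : ℂ))) •
            (1 : Matrix (Fin N) (Fin N) ℂ))⁻¹) (Set.Ioi R) volume ∧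
      IntegrableOn (fun r : ℝ => ((r : ℂ) * Complex.exp (Complex.I * (α₂ : ℂ)))⁻¹ •
          (a ξ - ((r : ℂ) * Complex.exp (Complex.I * (α₂ : ℂ))) •
            (1 : Matrix (Fin N) (Fin N) ℂ))⁻¹) (Set.Ioi R) volume ∧
      ∀ c : ℝ, 1 ≤ c →
        sectorialSymbolIntegral n N a α₁ α₂ R (c • ξ) =
          (c ^ (-m) : ℝ) • sectorialSymbolIntegral n N a α₁ α₂ R ξ :=
  sectorialSymbolIntegral_homogeneous_general n N m hm a hhom α₁ α₂ R hR hdisc hray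
end
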